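/- Let G be a multigraph on a finite nonempty vertex set V and f a divisor on G. Then dist_rec_G(f) ≤ Σ_{v ∈ V} d_G(v) + Σ_{v ∈ V : f(v) < 0} |f(v)|; equivalently, dist_rec_G(f) ≤ 2|E| + Σ_{v : f(v) < 0} |f(v)|, where |E| is the number of edges of G counted with multiplicity. -/
import Mathlib


variable {V : Type*} [Fintype V] [DecidableEq V]

/-- The degree of vertex `v` in the multigraph with edge-multiplicity function `m`. -/
def mgDeg (m : V → V → ℕ) (v : V) : ℕ := ∑ u, m v u

/-- The divisor obtained from `f` by firing vertex `v`. -/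
def mgFire (m : V → V → ℕ) (f : V → ℤ) (v : V) : V → ℤ :=
  fun u => if u = v then f v - mgDeg m v else f u + m v u

/-- The divisor obtained from `f` by firing the vertices of `L` in order. -/
def mgPlay (m : V → V → ℕ) (f : V → ℤ) (L : List V) : V → ℤ :=
  L.foldl (mgFire m) f

/-- `L` is a legal game from `f`: each fired vertex is active when fired. -/
def mgLegal (m : V → V → ℕ) : (V → ℤ) → List V → Prop
  | _, [] => True
  | f, v :: L => ((mgDeg m v : ℤ) ≤ f v) ∧ mgLegal m (mgFire m f v) L

/-- A divisor is stable if no vertex is active. -/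
def mgStable (m : V → V → ℕ) (f : V → ℤ) : Prop := ∀ v, f v < (mgDeg m v : ℤ)

/-- A divisor is halting if some legal game from it ends at a stable divisor. -/
def mgHalting (m : V → V → ℕ) (f : V → ℤ) : Prop :=
  ∃ L : List V, mgLegal m f L ∧ mgStable m (mgPlay m f L)

/-- A divisor is recurrent if some non-empty legal game from it leads back to it. -/
def mgRecurrent (m : V → V → ℕ) (f : V → ℤ) : Prop :=
  ∃ L : List V, L ≠ [] ∧ mgLegal m f L ∧ mgPlay m f L = f

/-- A divisor is effective if it is nonnegative everywhere. -/
def mgEffective (f : V → ℤ) : Prop := ∀ v, 0 ≤ f v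

/-- The degree of a divisor. -/
def mgDegDiv (f : V → ℤ) : ℤ := ∑ v, f v

/-- Distance of a divisor from a recurrent state. -/
noncomputable def mgDistRec (m : V → V → ℕ) (f : V → ℤ) : ℕ :=
  sInf {n : ℕ | ∃ g : V → ℤ, mgEffective g ∧ mgDegDiv g = (n : ℤ) ∧ mgRecurrent m (f + g)}

/-- Distance of a divisor from a non-halting state. -/
noncomputable def mgDistNonhalt (m : V → V → ℕ) (f : V → ℤ) : ℕ :=
  sInf {n : ℕ | ∃ g : V → ℤ, mgEffective g ∧ mgDegDiv g = (n : ℤ) ∧ ¬ mgHalting m (f + g)}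

/-- A multigraph is connected if any two vertices are joined by a path of
positive-multiplicity edges. -/
def mgConnected (m : V → V → ℕ) : Prop :=
  ∀ u v : V, Relation.ReflTransGen (fun a b => 0 < m a b) u v

/-- `f` and `g` are linearly equivalent: `f` can be transformed to `g` by firings. -/
def mgLinEquiv (m : V → V → ℕ) (f g : V → ℤ) : Prop :=
  ∃ L : List V, mgPlay m f L = g

/-- A divisor is winnable if it is linearly equivalent to an effective divisor. -/
def mgWinnable (m : V → V → ℕ) (f : V → ℤ) : Prop :=
  ∃ g : V → ℤ, mgEffective g ∧ mgLinEquiv m f g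

/-- The rank of a divisor. -/
noncomputable def mgRank (m : V → V → ℕ) (f : V → ℤ) : ℤ :=
  ((sInf {n : ℕ | ∃ g : V → ℤ, mgEffective g ∧ mgDegDiv g = (n : ℤ) ∧
    ¬ mgWinnable m (f - g)} : ℕ) : ℤ) - 1


lemma mgPlay_apply (m : V → V → ℕ) (hloop : ∀ v, m v v = 0) (f : V → ℤ) (L : List V) (v : V) :
    mgPlay m f L v = f v + (L.map (fun u => (m u v : ℤ))).sum - (L.count v) * (mgDeg m v : ℤ) := by
  induction L generalizing f with
  | nil => simp [mgPlay]
  | cons a L ih =>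
    have hfire : ∀ u, mgFire m f a u = f u + m a u - (if u = a then (mgDeg m a : ℤ) else 0) := by
      intro u
      by_cases h : u = a
      · subst h; simp [mgFire, hloop]
      · simp [mgFire, h]
    show mgPlay m (mgFire m f a) L v = _
    rw [ih, hfire v]
    simp only [List.count_cons, List.map_cons, List.sum_cons, beq_iff_eq]
    by_cases h : v = a
    · subst h
      simp only [if_pos rfl]
      push_cast
      ring
    · rw [if_neg h, if_neg (fun hh : a = v => h hh.symm)]
      push_cast
      ring

lemma mgLegal_of_ge (m : V → V → ℕ) : ∀ (L : List V) (f : V → ℤ), L.Nodup →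
    (∀ u ∈ L, (mgDeg m u : ℤ) ≤ f u) → mgLegal m f L := by
  intro L
  induction L with
  | nil => intro f _ _; trivial
  | cons a L ih =>
    intro f hnd hge
    refine ⟨hge a (by simp), ih _ hnd.of_cons ?_⟩
    intro u hu
    have hne : u ≠ a := by
      rintro rfl
      exact (List.nodup_cons.mp hnd).1 hu
    have h1 := hge u (List.mem_cons_of_mem _ hu)
    have : mgFire m f a u = f u + m a u := by simp [mgFire, hne]
    rw [this]
    have : (0 : ℤ) ≤ m a u := Int.natCast_nonneg _
    linarith

lemma mgRecurrent_of_ge [Nonempty V] (m : V → V → ℕ) (hsymm : ∀ u v, m u v = m v u)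
    (hloop : ∀ v, m v v = 0) (h : V → ℤ) (hh : ∀ v, (mgDeg m v : ℤ) ≤ h v) :
    mgRecurrent m h := by
  unfold mgRecurrent
  refine ⟨(Finset.univ (α := V)).toList, ?_, ?_, ?_⟩
  · have hlen : 0 < (Finset.univ (α := V)).toList.length := by
      rw [Finset.length_toList]
      exact Finset.card_pos.mpr Finset.univ_nonempty
    exact List.ne_nil_of_length_pos hlen
  · exact mgLegal_of_ge m _ h (Finset.nodup_toList _) (fun u _ => hh u)
  · funext v
    rw [mgPlay_apply m hloop h _ v]
    have hc : Finset.univ.toList.count v = 1 :=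
      List.count_eq_one_of_mem (Finset.nodup_toList _) (by simp)
    have hs : (Finset.univ.toList.map (fun u => (m u v : ℤ))).sum = (mgDeg m v : ℤ) := by
      rw [Finset.sum_map_toList]
      unfold mgDeg
      push_cast
      exact Finset.sum_congr rfl (fun u _ => by rw [hsymm])
    rw [hc, hs]
    ring

/-- `dist_rec_G(f) ≤ Σ_v d_G(v) + Σ_{v : f(v) < 0} |f(v)|`
(the first sum equals `2|E|`). -/
theorem stmt12 [Nonempty V] (m : V → V → ℕ) (hsymm : ∀ u v, m u v = m v u)
    (hloop : ∀ v, m v v = 0) (f : V → ℤ) :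
    (mgDistRec m f : ℤ) ≤
      (∑ v, (mgDeg m v : ℤ)) + ∑ v ∈ Finset.univ.filter (fun v => f v < 0), |f v| := by
  set N : ℕ := (∑ v, mgDeg m v) + ∑ v ∈ Finset.univ.filter (fun v => f v < 0), (f v).natAbs with hN
  have hrhs : (N : ℤ) = (∑ v, (mgDeg m v : ℤ)) + ∑ v ∈ Finset.univ.filter (fun v => f v < 0), |f v| := by
    push_cast [hN]
    rfl
  rw [← hrhs]
  have hmem : N ∈ {n : ℕ | ∃ g : V → ℤ, mgEffective g ∧ mgDegDiv g = (n : ℤ) ∧ mgRecurrent m (f + g)} := by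
    refine ⟨fun v => (mgDeg m v : ℤ) + max (-(f v)) 0, ?_, ?_, ?_⟩
    · intro v
      have : (0:ℤ) ≤ max (-(f v)) 0 := le_max_right _ _
      have : (0:ℤ) ≤ (mgDeg m v : ℤ) := Int.natCast_nonneg _
      positivity
    · unfold mgDegDiv
      rw [Finset.sum_add_distrib, hrhs]
      congr 1
      rw [Finset.sum_filter]
      refine Finset.sum_congr rfl (fun v _ => ?_)
      by_cases h : f v < 0
      · rw [if_pos h, max_eq_left (by linarith), abs_of_neg h]
      · rw [if_neg h, max_eq_right (by linarith)]
    · apply mgRecurrent_of_ge m hsymm hloop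
      intro v
      have : (0:ℤ) ≤ f v + max (-(f v)) 0 := by
        rcases le_total (f v) 0 with h | h
        · rw [max_eq_left (by linarith)]; linarith
        · rw [max_eq_right (by linarith)]; linarith
      simp only [Pi.add_apply]
      linarith
  have := Nat.sInf_le hmem
  exact_mod_cast this
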